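/- arXiv:2310.08448 — 3 statements merged into one kernel-verified Lean document; each statement's English description precedes it below -/
import Mathlib

section
/- The set of squarefree positive integers has natural density 6/π², i.e., the number of squarefree integers up to x is asymptotic to (6/π²)·x as x → ∞. -/
/-!
Möbius inversion over the divisors `d` with `d ^ 2 ∣ n` detects squarefreeness, so
`#{n ≤ N squarefree} = ∑_d μ(d) ⌊N / d²⌋`. After dividing by `N`, the `d`-th term tends to
`μ(d) / d²` and is bounded by `1 / d²`, so by dominated convergence for series (Tannery) the
density is `∑ μ(d) / d² = 1 / ζ(2) = 6 / π²`.
-/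

open Filter Finset ArithmeticFunction Topology Real
open scoped ArithmeticFunction.Moebius

namespace Nat

/-- The largest `d` with `d ^ 2 ∣ n`, for `n ≠ 0`. -/
noncomputable def sqrtSqPart (n : ℕ) : ℕ :=
  (n.factorization.mapRange (· / 2) (Nat.zero_div 2)).prod (· ^ ·)

lemma factorization_sqrtSqPart (n : ℕ) :
    (sqrtSqPart n).factorization = n.factorization.mapRange (· / 2) (Nat.zero_div 2) :=
  prod_pow_factorization_eq_self fun _ hp =>
    prime_of_mem_primeFactors (Finsupp.support_mapRange hp)

lemma sqrtSqPart_ne_zero (n : ℕ) : sqrtSqPart n ≠ 0 :=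
  Finsupp.prod_ne_zero_iff.mpr fun _ hp =>
    pow_ne_zero _ (prime_of_mem_primeFactors (Finsupp.support_mapRange hp)).ne_zero

lemma sq_dvd_iff_dvd_sqrtSqPart {n : ℕ} (hn : n ≠ 0) (d : ℕ) :
    d ^ 2 ∣ n ↔ d ∣ sqrtSqPart n := by
  rcases eq_or_ne d 0 with rfl | hd
  · simp [hn, sqrtSqPart_ne_zero]
  rw [← factorization_le_iff_dvd (pow_ne_zero 2 hd) hn,
    ← factorization_le_iff_dvd hd (sqrtSqPart_ne_zero n), factorization_sqrtSqPart,
    factorization_pow]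
  refine forall_congr' fun p => ?_
  simp only [Finsupp.smul_apply, Finsupp.mapRange_apply, smul_eq_mul]
  rw [Nat.le_div_iff_mul_le two_pos, mul_comm]

lemma sqrtSqPart_eq_one_iff {n : ℕ} (hn : n ≠ 0) : sqrtSqPart n = 1 ↔ Squarefree n := by
  simp only [Squarefree, ← sq, sq_dvd_iff_dvd_sqrtSqPart hn, Nat.isUnit_iff]
  exact ⟨fun h d hd => Nat.dvd_one.mp (h ▸ hd), fun h => h _ dvd_rfl⟩

section Ring

variable {R : Type*} [Ring R]

lemma sum_moebius_divisors_sqrtSqPart {n : ℕ} (hn : n ≠ 0) :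
    ∑ d ∈ (sqrtSqPart n).divisors, (μ d : R) = if Squarefree n then 1 else 0 := by
  simp_rw [← intCoe_apply, ← coe_mul_zeta_apply, coe_moebius_mul_coe_zeta, one_apply]
  exact if_congr (sqrtSqPart_eq_one_iff hn) rfl rfl

lemma card_squarefree_Icc_eq_sum_moebius (N : ℕ) :
    (#{n ∈ Icc 1 N | Squarefree n} : R) = ∑ d ∈ Icc 1 N, (μ d : R) * (N / d ^ 2 : ℕ) := by
  calc (#{n ∈ Icc 1 N | Squarefree n} : R)
      = ∑ n ∈ Icc 1 N, if Squarefree n then 1 else 0 := by rw [sum_boole]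
    _ = ∑ n ∈ Icc 1 N, ∑ d ∈ (sqrtSqPart n).divisors, (μ d : R) :=
        sum_congr rfl fun n hn =>
          (sum_moebius_divisors_sqrtSqPart (by simp at hn; omega)).symm
    _ = ∑ d ∈ Icc 1 N, ∑ n ∈ Icc 1 N with d ^ 2 ∣ n, (μ d : R) := by
        refine sum_comm' fun n d => ?_
        simp only [mem_Icc, mem_filter, mem_divisors, ne_eq, sqrtSqPart_ne_zero,
          not_false_eq_true, and_true]
        refine ⟨fun ⟨hn, hd⟩ => ?_, fun ⟨⟨hn, hd⟩, _⟩ =>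
          ⟨hn, (sq_dvd_iff_dvd_sqrtSqPart (by omega) d).mp hd⟩⟩
        have hd_sq := (sq_dvd_iff_dvd_sqrtSqPart (by omega) d).mpr hd
        have hd_pos : d ≠ 0 := by rintro rfl; simp at hd_sq; omega
        have hd_le := (Nat.le_self_pow two_ne_zero d).trans (Nat.le_of_dvd (by omega) hd_sq)
        exact ⟨⟨hn, hd_sq⟩, by omega, by omega⟩
    _ = ∑ d ∈ Icc 1 N, (μ d : R) * (N / d ^ 2 : ℕ) := by
        refine sum_congr rfl fun d _ => ?_
        rw [sum_const, show Icc 1 N = Ioc 0 N from Icc_add_one_left_eq_Ioc 0 N,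
          Ioc_filter_dvd_card_eq_div, nsmul_eq_mul, Nat.cast_comm]

end Ring

lemma cast_div_div_self_le (N k : ℕ) : ((N / k : ℕ) : ℝ) / N ≤ 1 / k := by
  rcases eq_or_ne N 0 with rfl | hN
  · simp
  calc ((N / k : ℕ) : ℝ) / N ≤ (N / k : ℝ) / N := by gcongr; exact cast_div_le
    _ = 1 / k := by field_simp

lemma tendsto_cast_div_div_self (k : ℕ) :
    Tendsto (fun N : ℕ ↦ ((N / k : ℕ) : ℝ) / N) atTop (𝓝 (1 / k)) := by
  rcases eq_or_ne k 0 with rfl | hk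
  · simp
  have hlim := (tendsto_nat_floor_div_atTop.comp
    ((tendsto_natCast_atTop_atTop (R := ℝ)).atTop_div_const (by positivity : (0 : ℝ) < k))).mul_const
    (1 / (k : ℝ))
  rw [one_mul] at hlim
  refine hlim.congr fun N => ?_
  simp only [Function.comp_apply, floor_div_eq_div]
  field_simp

end Nat

open Nat

lemma LSeries_moebius_eq_inv_riemannZeta {s : ℂ} (hs : 1 < s.re) :
    LSeries (fun n ↦ μ n) s = (riemannZeta s)⁻¹ := by
  rw [← LSeries_zeta_eq_riemannZeta hs]
  exact eq_inv_of_mul_eq_one_right (LSeries_zeta_mul_Lseries_moebius hs)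

lemma tsum_moebius_div_sq : ∑' n : ℕ, (μ n : ℝ) / n ^ 2 = 6 / π ^ 2 := by
  apply Complex.ofReal_injective
  have h := LSeries_moebius_eq_inv_riemannZeta (s := 2) (by norm_num)
  rw [riemannZeta_two, inv_div, LSeries] at h
  push_cast
  rw [← h]
  refine tsum_congr fun n => ?_
  rcases eq_or_ne n 0 with rfl | hn
  · simp
  · simp [LSeries.term_of_ne_zero hn]

lemma card_squarefree_Icc_div_eq_tsum (N : ℕ) :
    (#{n ∈ Icc 1 N | Squarefree n} : ℝ) / N = ∑' d, μ d * (((N / d ^ 2 : ℕ) : ℝ) / N) := by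
  rw [tsum_eq_sum (s := Icc 1 N)]
  · simp_rw [← mul_div_assoc, ← sum_div, card_squarefree_Icc_eq_sum_moebius]
  · intro d hd
    rcases eq_or_ne d 0 with rfl | hd0
    · simp
    have hNd : N < d ^ 2 :=
      (show N < d by simp at hd; omega).trans_le (Nat.le_self_pow two_ne_zero d)
    simp [Nat.div_eq_of_lt hNd]

lemma tendsto_card_squarefree_Icc_div :
    Tendsto (fun N : ℕ ↦ (#{n ∈ Icc 1 N | Squarefree n} : ℝ) / N) atTop (𝓝 (6 / π ^ 2)) := by
  simp_rw [card_squarefree_Icc_div_eq_tsum, ← tsum_moebius_div_sq, div_eq_mul_one_div (μ _ : ℝ)]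
  refine tendsto_tsum_of_dominated_convergence (Real.summable_one_div_nat_pow.mpr one_lt_two)
    (fun d ↦ by
      rw [← Nat.cast_pow]
      exact (tendsto_cast_div_div_self (d ^ 2)).const_mul _)
    (Eventually.of_forall fun N d ↦ ?_)
  rw [norm_mul, norm_of_nonneg (by positivity : (0 : ℝ) ≤ ((N / d ^ 2 : ℕ) : ℝ) / N)]
  calc ‖(μ d : ℝ)‖ * (((N / d ^ 2 : ℕ) : ℝ) / N) ≤ 1 * (1 / ((d ^ 2 : ℕ) : ℝ)) :=
        mul_le_mul (by rw [norm_eq_abs]; exact_mod_cast abs_moebius_le_one)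
          (cast_div_div_self_le _ _) (by positivity) zero_le_one
    _ = 1 / (d : ℝ) ^ 2 := by push_cast; ring

theorem squarefree_density :
    Tendsto (fun x : ℝ =>
        (((Finset.Icc 1 ⌊x⌋₊).filter (fun n => Squarefree n)).card : ℝ) / x)
      atTop (nhds (6 / Real.pi ^ 2)) := by
  have h := (tendsto_card_squarefree_Icc_div.comp tendsto_nat_floor_atTop).mul
    tendsto_nat_floor_div_atTop
  rw [mul_one] at h
  refine h.congr' ?_
  filter_upwards [eventually_ge_atTop 1] with x hx
  exact div_mul_div_cancel₀ (Nat.cast_pos.mpr (Nat.floor_pos.mpr hx)).ne'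
end

section
/- There are infinitely many positive integers n such that both n and n+1 are squarefree. -/
/-!
A non-squarefree `n ≤ x` is divisible by `4` or by `d ^ 2` for an odd `d ≥ 3`, so there are at most
`x / 4 + ∑ x / d ^ 2` of them. Since `1 / (2j + 1) ^ 2 ≤ 1 / (4j (j + 1))` telescopes, this is below
`x / 2` by a margin of order `√x`. Applying this to `x = m ^ 2` and `x = m ^ 2 + 1`, at most about
`m ^ 2 - m / 2` of the `n ≤ m ^ 2` fail to have both `n` and `n + 1` squarefree, so more than `N`
of them succeed once `m ≈ 2N`.
-/

open Finset

theorem sum_inv_odd_sq_le (s : ℕ) :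
    ∑ j ∈ Icc 1 s, (1 : ℚ) / (2 * j + 1) ^ 2 ≤ 1 / 4 - 1 / (4 * ((s : ℚ) + 1)) := by
  induction s with
  | zero => simp
  | succ s ih =>
    rw [sum_Icc_succ_top (by omega)]
    have hstep : (1 : ℚ) / (2 * (s + 1 : ℕ) + 1) ^ 2 ≤ 1 / (4 * (s + 1)) - 1 / (4 * (s + 1 + 1)) := by
      rw [div_sub_div _ _ (by positivity) (by positivity), div_le_div_iff₀ (by positivity) (by positivity)]
      push_cast
      nlinarith
    push_cast at hstep ⊢
    linarith

theorem Nat.four_dvd_or_exists_odd_sq_dvd_of_not_squarefree {n : ℕ} (hn : n ≠ 0)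
    (h : ¬Squarefree n) : 4 ∣ n ∨ ∃ j, 1 ≤ j ∧ (2 * j + 1) ^ 2 ≤ n ∧ (2 * j + 1) ^ 2 ∣ n := by
  obtain ⟨p, hp, hpn⟩ : ∃ p, p.Prime ∧ p ^ 2 ∣ n := by
    simpa [Nat.squarefree_iff_prime_squarefree, sq] using h
  rcases hp.eq_two_or_odd' with rfl | ⟨j, rfl⟩
  · exact Or.inl hpn
  · have hj : 1 ≤ j := by have := hp.two_le; omega
    exact Or.inr ⟨j, hj, Nat.le_of_dvd (Nat.pos_of_ne_zero hn) hpn, hpn⟩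

theorem card_filter_not_squarefree_le_sum {x s : ℕ} (hs : x < (s + 1) ^ 2) :
    #{n ∈ Ioc 0 x | ¬Squarefree n} ≤ x / 4 + ∑ j ∈ Icc 1 s, x / (2 * j + 1) ^ 2 := by
  have hcover : {n ∈ Ioc 0 x | ¬Squarefree n} ⊆
      {n ∈ Ioc 0 x | 4 ∣ n} ∪ (Icc 1 s).biUnion fun j => {n ∈ Ioc 0 x | (2 * j + 1) ^ 2 ∣ n} := by
    intro n hn
    simp only [mem_filter, mem_Ioc] at hn
    obtain ⟨⟨hn0, hnx⟩, hsq⟩ := hn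
    rcases Nat.four_dvd_or_exists_odd_sq_dvd_of_not_squarefree hn0.ne' hsq with h4 | ⟨j, hj, hjn, hdvd⟩
    · exact mem_union_left _ (mem_filter.2 ⟨mem_Ioc.2 ⟨hn0, hnx⟩, h4⟩)
    · have hjs : j ≤ s := by nlinarith
      exact mem_union_right _ (mem_biUnion.2
        ⟨j, mem_Icc.2 ⟨hj, hjs⟩, mem_filter.2 ⟨mem_Ioc.2 ⟨hn0, hnx⟩, hdvd⟩⟩)
  calc _ ≤ _ := card_le_card hcover
    _ ≤ _ := card_union_le _ _
    _ ≤ _ := add_le_add_right card_biUnion_le _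
    _ = _ := by simp only [Nat.Ioc_filter_dvd_card_eq_div]

theorem card_filter_not_squarefree_le {x s : ℕ} (hs : x < (s + 1) ^ 2) :
    4 * (s + 1) * #{n ∈ Ioc 0 x | ¬Squarefree n} ≤ (2 * s + 1) * x := by
  have hbound : (#{n ∈ Ioc 0 x | ¬Squarefree n} : ℚ) ≤ x * (1 / 2 - 1 / (4 * ((s : ℚ) + 1))) :=
    calc (#{n ∈ Ioc 0 x | ¬Squarefree n} : ℚ)
        ≤ ((x / 4 : ℕ) : ℚ) + ∑ j ∈ Icc 1 s, ((x / (2 * j + 1) ^ 2 : ℕ) : ℚ) := by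
          exact_mod_cast card_filter_not_squarefree_le_sum hs
      _ ≤ x / 4 + ∑ j ∈ Icc 1 s, (x : ℚ) / (2 * j + 1) ^ 2 := by
          gcongr with j
          · exact Nat.cast_div_le
          · exact_mod_cast Nat.cast_div_le
      _ = x * (1 / 4 + ∑ j ∈ Icc 1 s, (1 : ℚ) / (2 * j + 1) ^ 2) := by
          simp only [mul_add, mul_sum, mul_one_div]
      _ ≤ x * (1 / 2 - 1 / (4 * (s + 1))) := by
          gcongr
          linarith [sum_inv_odd_sq_le s]
  have : (4 * (s + 1) * #{n ∈ Ioc 0 x | ¬Squarefree n} : ℚ) ≤ (2 * s + 1) * x :=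
    calc _ ≤ (4 * (s + 1) : ℚ) * (x * (1 / 2 - 1 / (4 * (s + 1)))) := by gcongr
      _ = (2 * s + 1) * x := by field_simp; ring
  exact_mod_cast this

theorem le_card_filter_squarefree_and_succ (x : ℕ) :
    x ≤ #{n ∈ Ioc 0 x | Squarefree n ∧ Squarefree (n + 1)} +
      #{n ∈ Ioc 0 x | ¬Squarefree n} + #{n ∈ Ioc 0 (x + 1) | ¬Squarefree n} := by
  have hshift : #{n ∈ Ioc 0 x | ¬Squarefree (n + 1)} ≤ #{n ∈ Ioc 0 (x + 1) | ¬Squarefree n} := by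
    refine card_le_card_of_injOn (· + 1) (fun n hn => ?_) (fun a _ b _ h => Nat.succ_injective h)
    simp only [coe_filter, mem_Ioc, Set.mem_ofPred_eq] at hn ⊢
    exact ⟨⟨by omega, by omega⟩, hn.2⟩
  have hsplit : #{n ∈ Ioc 0 x | ¬(Squarefree n ∧ Squarefree (n + 1))} ≤
      #{n ∈ Ioc 0 x | ¬Squarefree n} + #{n ∈ Ioc 0 x | ¬Squarefree (n + 1)} := by
    simp only [not_and_or, filter_or]
    exact card_union_le _ _
  have htotal := card_filter_add_card_filter_not (s := Ioc 0 x)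
    (fun n => Squarefree n ∧ Squarefree (n + 1))
  rw [Nat.card_Ioc, Nat.sub_zero] at htotal
  omega

theorem infinitely_many_consecutive_squarefree :
    {n : ℕ | 0 < n ∧ Squarefree n ∧ Squarefree (n + 1)}.Infinite := by
  intro hfin
  obtain ⟨N, hN⟩ := hfin.bddAbove
  obtain ⟨m, hm⟩ : ∃ m, m = 2 * N + 3 := ⟨_, rfl⟩
  have hgood : #{n ∈ Ioc 0 (m ^ 2) | Squarefree n ∧ Squarefree (n + 1)} ≤ N := by
    calc _ ≤ #(Ioc 0 N) := card_le_card fun n hn => by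
          simp only [mem_filter, mem_Ioc] at hn
          exact mem_Ioc.2 ⟨hn.1.1, hN ⟨hn.1.1, hn.2⟩⟩
      _ = N := by simp
  have hbad := card_filter_not_squarefree_le (x := m ^ 2) (s := m) (by nlinarith)
  have hbad' := card_filter_not_squarefree_le (x := m ^ 2 + 1) (s := m) (by nlinarith)
  have htotal := le_card_filter_squarefree_and_succ (m ^ 2)
  nlinarith
end

section
/- Let P ≥ 2 and suppose p₁, p₂ are primes with P ≤ p₂ < p₁ < 2P, and t, u are positive integers with 1 ≤ |p₁²t − p₂²u| ≤ Δ. Then, writing v = gcd(t, u), t = v·t′, u = v·u′, we have 0 < |p₁²/p₂² − u′/t′| ≤ Δ/(P² t′ v) and consequently 0 < |√(u′/t′) − p₁/p₂| ≤ Δ/(P² v √(u′t′)). -/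
theorem gcd_reduction_approx (P Δ : ℝ) (hP : 2 ≤ P) (hΔ : 0 < Δ)
    (p₁ p₂ : ℕ) (hp₁ : p₁.Prime) (hp₂ : p₂.Prime)
    (h1 : P ≤ (p₂ : ℝ)) (h2 : p₂ < p₁) (h3 : (p₁ : ℝ) < 2 * P)
    (t u : ℕ) (ht : 0 < t) (hu : 0 < u)
    (hlow : 1 ≤ |(p₁ : ℝ) ^ 2 * t - (p₂ : ℝ) ^ 2 * u|)
    (hhigh : |(p₁ : ℝ) ^ 2 * t - (p₂ : ℝ) ^ 2 * u| ≤ Δ)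
    (v t' u' : ℕ) (hv : v = Nat.gcd t u) (ht' : t = v * t') (hu' : u = v * u') :
    (0 < |(p₁ : ℝ) ^ 2 / (p₂ : ℝ) ^ 2 - (u' : ℝ) / t'| ∧
      |(p₁ : ℝ) ^ 2 / (p₂ : ℝ) ^ 2 - (u' : ℝ) / t'| ≤ Δ / (P ^ 2 * t' * v)) ∧
    (0 < |Real.sqrt ((u' : ℝ) / t') - (p₁ : ℝ) / p₂| ∧
      |Real.sqrt ((u' : ℝ) / t') - (p₁ : ℝ) / p₂| ≤
        Δ / (P ^ 2 * v * Real.sqrt ((u' : ℝ) * t'))) := by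
  have hPpos : (0:ℝ) < P := by linarith
  have hp2pos : (0:ℝ) < p₂ := lt_of_lt_of_le hPpos h1
  have hp12 : (p₂:ℝ) < p₁ := by exact_mod_cast h2
  have hp1pos : (0:ℝ) < p₁ := by linarith
  have hvpos : 0 < v := by
    rcases Nat.eq_zero_or_pos v with h | h
    · subst h; simp at ht'; omega
    · exact h
  have ht'pos : 0 < t' := by
    rcases Nat.eq_zero_or_pos t' with h | h
    · subst h; simp at ht'; omega
    · exact h
  have hu'pos : 0 < u' := by
    rcases Nat.eq_zero_or_pos u' with h | h
    · subst h; simp at hu'; omega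
    · exact h
  have hvR : (0:ℝ) < v := by exact_mod_cast hvpos
  have ht'R : (0:ℝ) < t' := by exact_mod_cast ht'pos
  have hu'R : (0:ℝ) < u' := by exact_mod_cast hu'pos
  have htR : (t:ℝ) = v * t' := by exact_mod_cast congrArg Nat.cast ht'
  have huR : (u:ℝ) = v * u' := by exact_mod_cast congrArg Nat.cast hu'
  have hdenpos : (0:ℝ) < (p₂:ℝ)^2 * t' * v := by positivity
  have key : (p₁:ℝ)^2 / (p₂:ℝ)^2 - (u':ℝ)/t' =
      ((p₁:ℝ)^2*t - (p₂:ℝ)^2*u) / ((p₂:ℝ)^2 * t' * v) := by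
    rw [htR, huR]
    field_simp
  have habs : |(p₁:ℝ)^2 / (p₂:ℝ)^2 - (u':ℝ)/t'| =
      |(p₁:ℝ)^2*t - (p₂:ℝ)^2*u| / ((p₂:ℝ)^2 * t' * v) := by
    rw [key, abs_div, abs_of_pos hdenpos]
  have hden2pos : (0:ℝ) < P^2 * t' * v := by positivity
  have hdenle : P^2 * t' * v ≤ (p₂:ℝ)^2 * t' * v := by
    have : P^2 ≤ (p₂:ℝ)^2 := by nlinarith
    nlinarith
  have first_pos : 0 < |(p₁:ℝ)^2 / (p₂:ℝ)^2 - (u':ℝ)/t'| := by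
    rw [habs]
    apply div_pos (by linarith) hdenpos
  have first_le : |(p₁:ℝ)^2 / (p₂:ℝ)^2 - (u':ℝ)/t'| ≤ Δ / (P^2 * t' * v) := by
    rw [habs]
    exact div_le_div₀ hΔ.le hhigh hden2pos hdenle
  refine ⟨⟨first_pos, first_le⟩, ?_, ?_⟩
  all_goals
    set a := Real.sqrt ((u':ℝ)/t') with ha
    set b := (p₁:ℝ)/p₂ with hb
  · -- positivity of second
    have hbpos : 0 < b := div_pos hp1pos hp2pos
    have hapos : 0 < a := Real.sqrt_pos.mpr (by positivity)
    have hsq : a^2 = (u':ℝ)/t' := Real.sq_sqrt (by positivity)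
    have hb2 : b^2 = (p₁:ℝ)^2/(p₂:ℝ)^2 := by rw [hb, div_pow]
    have hne : a ≠ b := by
      intro h
      have : a^2 = b^2 := by rw [h]
      rw [hsq, hb2] at this
      rw [← this] at first_pos
      simp at first_pos
    exact abs_pos.mpr (sub_ne_zero.mpr hne)
  · -- bound
    have hbpos : 0 < b := div_pos hp1pos hp2pos
    have hapos : 0 < a := Real.sqrt_pos.mpr (by positivity)
    have hsq : a^2 = (u':ℝ)/t' := Real.sq_sqrt (by positivity)
    have hb2 : b^2 = (p₁:ℝ)^2/(p₂:ℝ)^2 := by rw [hb, div_pow]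
    have habpos : 0 < a + b := by linarith
    have hstep1 : |a - b| = |a^2 - b^2| / (a + b) := by
      rw [eq_div_iff (ne_of_gt habpos), ← abs_of_pos habpos, ← abs_mul]
      congr 1; ring
    have hstep2 : |a^2 - b^2| ≤ Δ / (P^2 * t' * v) := by
      rw [hsq, hb2, abs_sub_comm]
      exact first_le
    have hsqrtpos : 0 < Real.sqrt ((u':ℝ) * t') := Real.sqrt_pos.mpr (by positivity)
    have hsqrtdiv : Real.sqrt ((u':ℝ) * t') = a * t' := by
      have hrw : ((u':ℝ) * t') = ((u':ℝ)/t') * t'^2 := by field_simp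
      rw [hrw, Real.sqrt_mul (by positivity : (0:ℝ) ≤ (u':ℝ)/t'), Real.sqrt_sq ht'R.le, ha]
    have hstep3 : Real.sqrt ((u':ℝ) * t') / t' ≤ a + b := by
      rw [hsqrtdiv, mul_div_assoc, div_self (ne_of_gt ht'R), mul_one]
      linarith
    have hstep3pos : 0 < Real.sqrt ((u':ℝ) * t') / t' := div_pos hsqrtpos ht'R
    have hmain : |a - b| ≤ (Δ / (P^2 * t' * v)) / (Real.sqrt ((u':ℝ) * t') / t') := by
      rw [hstep1]
      exact div_le_div₀ (by positivity) hstep2 hstep3pos hstep3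
    calc |a - b| ≤ (Δ / (P^2 * t' * v)) / (Real.sqrt ((u':ℝ) * t') / t') := hmain
      _ = Δ / (P^2 * v * Real.sqrt ((u':ℝ) * t')) := by
          field_simp
end
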